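/- arXiv:math/0508408 — 6 statements merged into one kernel-verified Lean document; each statement's English description precedes it below -/
import Mathlib

section
/- In SL₃ (or any group where e_α, e_β are the Chevalley generators of a type A₂ root subsystem), for scalars a, b, c with a + c ≠ 0 one has exp(a·e_α)·exp(b·e_β)·exp(c·e_α) = exp((bc/(a+c))·e_β)·exp((a+c)·e_α)·exp((ab/(a+c))·e_β). For 3×3 matrices, take e_α = E₁₂ and e_β = E₂₃ (elementary matrix units). -/
open Matrix

/-- The finite exponential series for a 3×3 nilpotent matrix (cube vanishes for
strictly upper triangular matrices, and the arguments below even square to zero). -/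
noncomputable def expNil {K : Type*} [Field K] (A : Matrix (Fin 3) (Fin 3) K) :
    Matrix (Fin 3) (Fin 3) K :=
  1 + A + (2 : K)⁻¹ • (A * A)

/-- The elementary matrix unit `E₁₂`. -/
def E12 {K : Type*} [Field K] : Matrix (Fin 3) (Fin 3) K := !![0, 1, 0; 0, 0, 0; 0, 0, 0]

/-- The elementary matrix unit `E₂₃`. -/
def E23 {K : Type*} [Field K] : Matrix (Fin 3) (Fin 3) K := !![0, 0, 0; 0, 0, 1; 0, 0, 0]


lemma expE12 {K : Type*} [Field K] (t : K) :
    expNil (t • (E12 : Matrix (Fin 3) (Fin 3) K)) = !![1, t, 0; 0, 1, 0; 0, 0, 1] := by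
  unfold expNil E12
  ext i j
  fin_cases i <;> fin_cases j <;>
    simp [Matrix.mul_apply, Fin.sum_univ_succ, Matrix.one_apply, Matrix.vecHead, Matrix.vecTail]

lemma expE23 {K : Type*} [Field K] (t : K) :
    expNil (t • (E23 : Matrix (Fin 3) (Fin 3) K)) = !![1, 0, 0; 0, 1, t; 0, 0, 1] := by
  unfold expNil E23
  ext i j
  fin_cases i <;> fin_cases j <;>
    simp [Matrix.mul_apply, Fin.sum_univ_succ, Matrix.one_apply, Matrix.vecHead, Matrix.vecTail]

/-- In SL₃, for scalars `a, b, c` with `a + c ≠ 0`,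
`exp(a·e_α)·exp(b·e_β)·exp(c·e_α)
  = exp((bc/(a+c))·e_β)·exp((a+c)·e_α)·exp((ab/(a+c))·e_β)`,
where `e_α = E₁₂`, `e_β = E₂₃`. -/
theorem stmt2 {K : Type*} [Field K] [CharZero K] (a b c : K) (h : a + c ≠ 0) :
    expNil (a • (E12 : Matrix (Fin 3) (Fin 3) K)) * expNil (b • E23) * expNil (c • E12) =
      expNil ((b * c / (a + c)) • (E23 : Matrix (Fin 3) (Fin 3) K)) *
        expNil ((a + c) • E12) * expNil ((a * b / (a + c)) • E23) := by
  simp only [expE12, expE23]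
  ext i j
  fin_cases i <;> fin_cases j <;>
    simp [Matrix.mul_apply, Fin.sum_univ_succ] <;>
    (try field_simp) <;> ring_nf
end

section
/- Matrix mutation preserves skew-symmetrizability: if ε_{ij} is a matrix with d_j positive integers such that ε_{ij}·d_j is skew-symmetric, then the mutated matrix ε'_{ij} (given by ε'_{ij} = -ε_{ij} if i=k or j=k; ε'_{ij} = ε_{ij} + ε_{ik}·max(0, ε_{kj}) if ε_{ik} ≥ 0; ε'_{ij} = ε_{ij} + ε_{ik}·max(0, -ε_{kj}) if ε_{ik} < 0) also satisfies that ε'_{ij}·d_j is skew-symmetric. -/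
/-- Mutation of a rational exchange matrix `ε` at the vertex `k`. -/
noncomputable def mutMatQ {I : Type*} [DecidableEq I] (ε : I → I → ℚ) (k : I) :
    I → I → ℚ := fun i j =>
  if i = k ∨ j = k then -ε i j
  else if 0 ≤ ε i k then ε i j + ε i k * max 0 (ε k j)
  else ε i j + ε i k * max 0 (-ε k j)

/-- matrix mutation preserves skew-symmetrizability: if
`ε_{ij}·d_j = -ε_{ji}·d_i` with positive integers `d_i`, then the same holds
for the mutated matrix. -/
theorem stmt4 {I : Type*} [DecidableEq I] [Fintype I] (ε : I → I → ℚ) (d : I → ℤ)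
    (hd : ∀ i, 0 < d i) (hskew : ∀ i j, ε i j * d j = -(ε j i * d i)) (k : I) :
    ∀ i j, mutMatQ ε k i j * d j = -(mutMatQ ε k j i * d i) := by
  intro i j
  have hdq : ∀ i, (0:ℚ) < (d i : ℚ) := fun i => by exact_mod_cast hd i
  unfold mutMatQ
  by_cases hik : i = k <;> by_cases hjk : j = k <;> simp [hik, hjk]
  · have := hskew k k; linarith
  · have := hskew k j; linarith
  · have := hskew i k; linarith
  · -- i ≠ k, j ≠ k
    have h1 := hskew i j
    have h2 := hskew i k
    have h3 := hskew j k
    have h4 := hskew k j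
    have h5 := hskew k i
    have hdk := hdq k
    have hdi := hdq i
    have hdj := hdq j
    -- sign relations
    have sik : (0 ≤ ε i k) ↔ (ε k i ≤ 0) := by
      constructor <;> intro h <;> nlinarith
    have sjk : (0 ≤ ε j k) ↔ (ε k j ≤ 0) := by
      constructor <;> intro h <;> nlinarith
    by_cases ha : 0 ≤ ε i k <;> by_cases hb : 0 ≤ ε j k <;> simp [ha, hb]
    · rw [max_eq_left (sjk.mp hb), max_eq_left (sik.mp ha)]
      simpa using h1
    · have hkj : 0 < ε k j := by
        by_contra h; push_neg at h; exact hb (sjk.mpr h)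
      rw [max_eq_right hkj.le, max_eq_right (neg_nonneg.mpr (sik.mp ha))]
      linear_combination h1 + ε i k * h4 - ε j k * h2
    · have hki : 0 < ε k i := by
        by_contra h; push_neg at h; exact ha (sik.mpr h)
      rw [max_eq_right (neg_nonneg.mpr (sjk.mp hb)), max_eq_right hki.le]
      linear_combination h1 - ε i k * h4 + ε j k * h2
    · have hki : 0 < ε k i := by
        by_contra h; push_neg at h; exact ha (sik.mpr h)
      have hkj : 0 < ε k j := by
        by_contra h; push_neg at h; exact hb (sjk.mpr h)
      rw [max_eq_left (neg_nonpos.mpr hkj.le), max_eq_left (neg_nonpos.mpr hki.le)]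
      simpa using h1
end

section
/- The cluster X-mutation is a Poisson map: with Poisson bracket {x_i, x_j} = ε̂_{ij} x_i x_j where ε̂_{ij} = ε_{ij} d_j is skew-symmetric, the mutation map μ_k (acting on coordinates and on ε by the standard rules) satisfies {μ_k^* x'_i, μ_k^* x'_j} = ε̂'_{ij} · μ_k^* x'_i · μ_k^* x'_j, where ε̂'_{ij} = ε'_{ij} d_j is the mutated skew-symmetrized matrix. Verify this for the case |I| = 2 with I = {1,2}, ε_{12} = -ε_{21}·(d₁/d₂) arbitrary integers, mutating at k = 1. -/
/-- the cluster X-mutation is a Poisson map, rank-2 case, mutation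
at `k = 1`.  The Poisson bracket is axiomatized as an antisymmetric biderivation
`P` (additive and Leibniz in each argument) on a field of rational functions,
with `{x₁,x₂} = ε̂₁₂ x₁x₂` where `ε̂₁₂ = ε₁₂ d₂` and `ε₁₂ d₂ = -ε₂₁ d₁`.
After mutating at vertex 1 (`x₁' = x₁⁻¹`,
`x₂' = x₂(1+x₁)^{ε₂₁}` if `ε₂₁ ≥ 0`, `x₂' = x₂(1+x₁⁻¹)^{ε₂₁}` otherwise,
`ε₁₂' = -ε₁₂`), one has `{x₁',x₂'} = ε̂₁₂' x₁' x₂'`. -/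
theorem stmt5 {K : Type*} [Field K] [CharZero K] (P : K → K → K)
    (Padd₁ : ∀ a b c : K, P (a + b) c = P a c + P b c)
    (Padd₂ : ∀ a b c : K, P a (b + c) = P a b + P a c)
    (Pleib₁ : ∀ a b c : K, P (a * b) c = a * P b c + b * P a c)
    (Pleib₂ : ∀ a b c : K, P a (b * c) = b * P a c + c * P a b)
    (Pskew : ∀ a b : K, P a b = -P b a)
    (ε₁₂ ε₂₁ : ℤ) (d₁ d₂ : ℤ) (hd₁ : 0 < d₁) (hd₂ : 0 < d₂)
    (hskew : ε₁₂ * d₂ = -(ε₂₁ * d₁))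
    (x₁ x₂ : K) (hx₁ : x₁ ≠ 0) (hx₂ : x₂ ≠ 0) (h1x₁ : 1 + x₁ ≠ 0)
    (hP : P x₁ x₂ = ((ε₁₂ * d₂ : ℤ) : K) * (x₁ * x₂)) :
    P x₁⁻¹ (if 0 ≤ ε₂₁ then x₂ * (1 + x₁) ^ ε₂₁ else x₂ * (1 + x₁⁻¹) ^ ε₂₁) =
      ((-ε₁₂ * d₂ : ℤ) : K) *
        (x₁⁻¹ * (if 0 ≤ ε₂₁ then x₂ * (1 + x₁) ^ ε₂₁ else x₂ * (1 + x₁⁻¹) ^ ε₂₁)) := by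
  -- basic consequences
  have Pone₂ : ∀ a : K, P a 1 = 0 := by
    intro a
    have h := Pleib₂ a 1 1
    simp at h
    linear_combination h
  have Pone₁ : ∀ a : K, P 1 a = 0 := by
    intro a; rw [Pskew, Pone₂, neg_zero]
  have Pself : ∀ a : K, P a a = 0 := by
    intro a
    have h := Pskew a a
    have h2 : P a a + P a a = 0 := by linear_combination h
    exact add_self_eq_zero.mp h2
  have Pinv₂ : ∀ a c : K, c ≠ 0 → P a c = 0 → P a c⁻¹ = 0 := by
    intro a c hc h
    have h1 := Pleib₂ a c⁻¹ c
    rw [inv_mul_cancel₀ hc, Pone₂, h] at h1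
    have h2 : c * P a c⁻¹ = 0 := by linear_combination -h1
    rcases mul_eq_zero.mp h2 with h' | h'
    · exact absurd h' hc
    · exact h'
  have Pnpow : ∀ (a c : K), P a c = 0 → ∀ n : ℕ, P a (c ^ n) = 0 := by
    intro a c h n
    induction n with
    | zero => simpa using Pone₂ a
    | succ m ih =>
      rw [pow_succ, Pleib₂, ih, h]
      ring
  have Pzpow : ∀ (a c : K), c ≠ 0 → P a c = 0 → ∀ n : ℤ, P a (c ^ n) = 0 := by
    intro a c hc h n
    cases n with
    | ofNat m => simpa using Pnpow a c h m
    | negSucc m =>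
      rw [zpow_negSucc]
      exact Pinv₂ a _ (pow_ne_zero _ hc) (Pnpow a c h (m + 1))
  -- P x₁⁻¹ b = -(x₁⁻¹ * x₁⁻¹) * P x₁ b
  have Pinv_left : ∀ b : K, P x₁⁻¹ b = -(x₁⁻¹ * x₁⁻¹) * P x₁ b := by
    intro b
    have h1 := Pleib₁ x₁⁻¹ x₁ b
    rw [inv_mul_cancel₀ hx₁, Pone₁] at h1
    have h2 : x₁ * P x₁⁻¹ b = -(x₁⁻¹ * P x₁ b) := by linear_combination -h1
    calc P x₁⁻¹ b = x₁⁻¹ * (x₁ * P x₁⁻¹ b) := by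
          rw [← mul_assoc, inv_mul_cancel₀ hx₁, one_mul]
      _ = x₁⁻¹ * (-(x₁⁻¹ * P x₁ b)) := by rw [h2]
      _ = -(x₁⁻¹ * x₁⁻¹) * P x₁ b := by ring
  have Px1u : P x₁ (1 + x₁) = 0 := by
    rw [Padd₂, Pone₂, Pself]; ring
  have Px1ui : P x₁ (1 + x₁⁻¹) = 0 := by
    rw [Padd₂, Pone₂, Pinv₂ x₁ x₁ hx₁ (Pself x₁)]; ring
  have h1xi : (1 : K) + x₁⁻¹ ≠ 0 := by
    intro h
    apply h1x₁
    have hmul : x₁ * (1 + x₁⁻¹) = x₁ + 1 := by field_simp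
    have h2 : x₁ + 1 = 0 := by rw [← hmul, h, mul_zero]
    linear_combination h2
  have hxx : x₁⁻¹ * x₁⁻¹ * x₁ = x₁⁻¹ := by field_simp
  split_ifs with hε
  · have key : P x₁ ((1 + x₁) ^ ε₂₁) = 0 := Pzpow x₁ _ h1x₁ Px1u ε₂₁
    rw [Pinv_left, Pleib₂, key, hP]
    push_cast
    linear_combination (-((ε₁₂ : K) * d₂) * x₂ * (1 + x₁) ^ ε₂₁) * hxx
  · have key : P x₁ ((1 + x₁⁻¹) ^ ε₂₁) = 0 := Pzpow x₁ _ h1xi Px1ui ε₂₁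
    rw [Pinv_left, Pleib₂, key, hP]
    push_cast
    linear_combination (-((ε₁₂ : K) * d₂) * x₂ * (1 + x₁⁻¹) ^ ε₂₁) * hxx
end

section
/- In the free group (or any group) on elements λ₃, λ₄, λ₅, λ₇, λ₁₀, λ₁₁, λ₁₂, λ₁₄, the quotient by the relations λ₄⁻¹λ₁₀λ₃λ₁₄⁻¹λ₃⁻¹ = 1, λ₅λ₁₂⁻¹λ₇λ₁₁λ₇⁻¹ = 1, λ₅λ₇ = 1, λ₄λ₃⁻¹ = 1, λ₅⁻¹λ₄⁻¹ = 1, λ₁₁⁻¹λ₁₀ = 1, λ₁₂⁻¹λ₁₄ = 1 is isomorphic to the braid group of type G₂ on generators a, b with relation bababa = ababab. -/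
namespace Stmt7

/-- Generators `λ₃, λ₄, λ₅, λ₇, λ₁₀, λ₁₁, λ₁₂, λ₁₄`, indexed by `0,…,7`. -/
def l (i : Fin 8) : FreeGroup (Fin 8) := FreeGroup.of i

/-- The seven relations
`λ₄⁻¹λ₁₀λ₃λ₁₄⁻¹λ₃⁻¹`, `λ₅λ₁₂⁻¹λ₇λ₁₁λ₇⁻¹`, `λ₅λ₇`, `λ₄λ₃⁻¹`, `λ₅⁻¹λ₄⁻¹`,
`λ₁₁⁻¹λ₁₀`, `λ₁₂⁻¹λ₁₄`. -/
def rels : Set (FreeGroup (Fin 8)) :=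
  { (l 1)⁻¹ * l 4 * l 0 * (l 7)⁻¹ * (l 0)⁻¹,
    l 2 * (l 6)⁻¹ * l 3 * l 5 * (l 3)⁻¹,
    l 2 * l 3,
    l 1 * (l 0)⁻¹,
    (l 2)⁻¹ * (l 1)⁻¹,
    (l 5)⁻¹ * l 4,
    (l 6)⁻¹ * l 7 }

/-- The braid group of type G₂: generators `a, b`, relation `ababab = bababa`. -/
def braidRels : Set (FreeGroup (Fin 2)) :=
  { FreeGroup.of 0 * FreeGroup.of 1 * FreeGroup.of 0 * FreeGroup.of 1 *
      FreeGroup.of 0 * FreeGroup.of 1 *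
      (FreeGroup.of 1 * FreeGroup.of 0 * FreeGroup.of 1 * FreeGroup.of 0 *
        FreeGroup.of 1 * FreeGroup.of 0)⁻¹ }

/- ### Auxiliary material -/

abbrev P := PresentedGroup rels
abbrev B := PresentedGroup braidRels

def p (i : Fin 8) : P := PresentedGroup.of i
def q (i : Fin 2) : B := PresentedGroup.of i

lemma relOne {α : Type*} {S : Set (FreeGroup α)} {r : FreeGroup α} (h : r ∈ S) :
    PresentedGroup.mk S r = 1 :=
  (QuotientGroup.eq_one_iff r).mpr (Subgroup.subset_normalClosure h)

lemma mk_of {α : Type*} {S : Set (FreeGroup α)} (i : α) :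
    PresentedGroup.mk S (FreeGroup.of i) = PresentedGroup.of i := rfl

/- relations in `P` -/
lemma h1 : (p 1)⁻¹ * p 4 * p 0 * (p 7)⁻¹ * (p 0)⁻¹ = 1 := by
  simpa [l, p, mk_of] using relOne (S := rels)
    (show (l 1)⁻¹ * l 4 * l 0 * (l 7)⁻¹ * (l 0)⁻¹ ∈ rels by simp [rels])

lemma h2 : p 2 * (p 6)⁻¹ * p 3 * p 5 * (p 3)⁻¹ = 1 := by
  simpa [l, p, mk_of] using relOne (S := rels)
    (show l 2 * (l 6)⁻¹ * l 3 * l 5 * (l 3)⁻¹ ∈ rels by simp [rels])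

lemma h3 : p 2 * p 3 = 1 := by
  simpa [l, p, mk_of] using relOne (S := rels) (show l 2 * l 3 ∈ rels by simp [rels])

lemma h4 : p 1 * (p 0)⁻¹ = 1 := by
  simpa [l, p, mk_of] using relOne (S := rels) (show l 1 * (l 0)⁻¹ ∈ rels by simp [rels])

lemma h5 : (p 2)⁻¹ * (p 1)⁻¹ = 1 := by
  simpa [l, p, mk_of] using relOne (S := rels) (show (l 2)⁻¹ * (l 1)⁻¹ ∈ rels by simp [rels])

lemma h6 : (p 5)⁻¹ * p 4 = 1 := by
  simpa [l, p, mk_of] using relOne (S := rels) (show (l 5)⁻¹ * l 4 ∈ rels by simp [rels])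

lemma h7 : (p 6)⁻¹ * p 7 = 1 := by
  simpa [l, p, mk_of] using relOne (S := rels) (show (l 6)⁻¹ * l 7 ∈ rels by simp [rels])

lemma e4 : p 1 = p 0 := mul_inv_eq_one.mp h4
lemma e5 : p 2 = (p 0)⁻¹ := by
  calc p 2 = (p 1)⁻¹ * ((p 2)⁻¹ * (p 1)⁻¹)⁻¹ := by group
  _ = (p 0)⁻¹ := by rw [h5, e4]; group
lemma e3 : p 3 = p 0 := by
  calc p 3 = (p 2)⁻¹ * (p 2 * p 3) := by group
  _ = p 0 := by rw [h3, e5]; group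
lemma e6 : p 5 = p 4 := inv_mul_eq_one.mp h6
lemma e7 : p 7 = p 6 := (inv_mul_eq_one.mp h7).symm

lemma hA1 : p 4 = p 0 * p 0 * p 6 * (p 0)⁻¹ := by
  have h1' : (p 0)⁻¹ * p 4 * p 0 * (p 6)⁻¹ * (p 0)⁻¹ = 1 := by
    have h := h1; rw [e4, e7] at h; exact h
  calc p 4 = p 0 * ((p 0)⁻¹ * p 4 * p 0 * (p 6)⁻¹ * (p 0)⁻¹) * (p 0 * p 6 * (p 0)⁻¹) := by group
  _ = p 0 * p 0 * p 6 * (p 0)⁻¹ := by rw [h1']; group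

lemma hA2 : p 4 = (p 0)⁻¹ * p 6 * p 0 * p 0 := by
  have h2' : (p 0)⁻¹ * (p 6)⁻¹ * p 0 * p 4 * (p 0)⁻¹ = 1 := by
    have h := h2; rw [e5, e3, e6] at h; exact h
  calc p 4 = (p 0)⁻¹ * p 6 * p 0 * ((p 0)⁻¹ * (p 6)⁻¹ * p 0 * p 4 * (p 0)⁻¹) * p 0 := by group
  _ = (p 0)⁻¹ * p 6 * p 0 * p 0 := by rw [h2']; group

lemma hcomm : p 0 * p 0 * p 0 * p 6 = p 6 * (p 0 * p 0 * p 0) := by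
  have heq : p 0 * p 0 * p 6 * (p 0)⁻¹ = (p 0)⁻¹ * p 6 * p 0 * p 0 := hA1.symm.trans hA2
  calc p 0 * p 0 * p 0 * p 6 = p 0 * (p 0 * p 0 * p 6 * (p 0)⁻¹) * p 0 := by group
  _ = p 0 * ((p 0)⁻¹ * p 6 * p 0 * p 0) * p 0 := by rw [heq]
  _ = p 6 * (p 0 * p 0 * p 0) := by group

lemma hcomm' : (p 6)⁻¹ * (p 0 * p 0 * p 0) = p 0 * p 0 * p 0 * (p 6)⁻¹ := by
  calc (p 6)⁻¹ * (p 0 * p 0 * p 0) = (p 6)⁻¹ * (p 0 * p 0 * p 0 * p 6) * (p 6)⁻¹ := by group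
  _ = (p 6)⁻¹ * (p 6 * (p 0 * p 0 * p 0)) * (p 6)⁻¹ := by rw [hcomm]
  _ = p 0 * p 0 * p 0 * (p 6)⁻¹ := by group

/-- the image of `a*b` is `p 0` -/
lemma hAB : p 4 * (p 0 * (p 6)⁻¹ * (p 0)⁻¹) = p 0 := by
  rw [hA1]; group

lemma hL : p 4 * (p 0 * (p 6)⁻¹ * (p 0)⁻¹) * p 4 * (p 0 * (p 6)⁻¹ * (p 0)⁻¹) * p 4 *
    (p 0 * (p 6)⁻¹ * (p 0)⁻¹) = p 0 * (p 0 * p 0) := by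
  calc _ = (p 4 * (p 0 * (p 6)⁻¹ * (p 0)⁻¹)) * ((p 4 * (p 0 * (p 6)⁻¹ * (p 0)⁻¹)) *
        (p 4 * (p 0 * (p 6)⁻¹ * (p 0)⁻¹))) := by group
  _ = p 0 * (p 0 * p 0) := by rw [hAB]

lemma hR : (p 0 * (p 6)⁻¹ * (p 0)⁻¹) * p 4 * (p 0 * (p 6)⁻¹ * (p 0)⁻¹) * p 4 *
    (p 0 * (p 6)⁻¹ * (p 0)⁻¹) * p 4 = p 0 * (p 0 * p 0) := by
  calc _ = (p 0 * (p 6)⁻¹ * (p 0)⁻¹) * ((p 4 * (p 0 * (p 6)⁻¹ * (p 0)⁻¹)) *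
        ((p 4 * (p 0 * (p 6)⁻¹ * (p 0)⁻¹)) * (p 4 * (p 0 * (p 6)⁻¹ * (p 0)⁻¹)))) *
        (p 0 * (p 6)⁻¹ * (p 0)⁻¹)⁻¹ := by group
  _ = (p 0 * (p 6)⁻¹ * (p 0)⁻¹) * (p 0 * (p 0 * p 0)) * (p 0 * (p 6)⁻¹ * (p 0)⁻¹)⁻¹ := by
        rw [hAB]
  _ = p 0 * ((p 6)⁻¹ * (p 0 * p 0 * p 0)) * p 6 * (p 0)⁻¹ := by group
  _ = p 0 * (p 0 * p 0 * p 0 * (p 6)⁻¹) * p 6 * (p 0)⁻¹ := by rw [hcomm']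
  _ = p 0 * (p 0 * p 0) := by group

/- braid relation in `B` -/
lemma braid : q 0 * q 1 * q 0 * q 1 * q 0 * q 1 = q 1 * q 0 * q 1 * q 0 * q 1 * q 0 := by
  have := relOne (S := braidRels)
    (show FreeGroup.of 0 * FreeGroup.of 1 * FreeGroup.of 0 * FreeGroup.of 1 *
      FreeGroup.of 0 * FreeGroup.of 1 *
      (FreeGroup.of 1 * FreeGroup.of 0 * FreeGroup.of 1 * FreeGroup.of 0 *
        FreeGroup.of 1 * FreeGroup.of 0)⁻¹ ∈ braidRels by simp [braidRels])
  simp only [map_mul, map_inv, mk_of] at this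
  exact mul_inv_eq_one.mp this

/- the maps -/
def fB : Fin 8 → B := fun i =>
  match i with
  | 0 => q 0 * q 1
  | 1 => q 0 * q 1
  | 2 => (q 0 * q 1)⁻¹
  | 3 => q 0 * q 1
  | 4 => q 0
  | 5 => q 0
  | 6 => (q 0 * q 1)⁻¹ * (q 1)⁻¹ * (q 0 * q 1)
  | 7 => (q 0 * q 1)⁻¹ * (q 1)⁻¹ * (q 0 * q 1)

def gP : Fin 2 → P := fun i =>
  match i with
  | 0 => p 4
  | 1 => p 0 * (p 6)⁻¹ * (p 0)⁻¹

lemma hf : ∀ r ∈ rels, FreeGroup.lift fB r = 1 := by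
  intro r hr
  simp only [rels, Set.mem_insert_iff, Set.mem_singleton_iff] at hr
  rcases hr with rfl | rfl | rfl | rfl | rfl | rfl | rfl <;>
    simp only [l, map_mul, map_inv, FreeGroup.lift_apply_of, fB]
  · group
  · -- needs the braid relation
    calc ((q 0 * q 1)⁻¹)⁻¹⁻¹ * ((q 0 * q 1)⁻¹ * (q 1)⁻¹ * (q 0 * q 1))⁻¹ * (q 0 * q 1) * q 0 *
        (q 0 * q 1)⁻¹
        = (q 1)⁻¹ * (q 0)⁻¹ * (q 1)⁻¹ * (q 0)⁻¹ *
          (q 1 * q 0 * q 1 * q 0 * q 1 * q 0) * (q 1)⁻¹ * (q 0)⁻¹ := by group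
    _ = (q 1)⁻¹ * (q 0)⁻¹ * (q 1)⁻¹ * (q 0)⁻¹ *
          (q 0 * q 1 * q 0 * q 1 * q 0 * q 1) * (q 1)⁻¹ * (q 0)⁻¹ := by rw [← braid]
    _ = 1 := by group
  · group
  · group
  · group
  · group
  · group

lemma hg : ∀ r ∈ braidRels, FreeGroup.lift gP r = 1 := by
  intro r hr
  simp only [braidRels, Set.mem_singleton_iff] at hr
  subst hr
  simp only [map_mul, map_inv, FreeGroup.lift_apply_of, gP]
  rw [mul_inv_eq_one]
  calc p 4 * (p 0 * (p 6)⁻¹ * (p 0)⁻¹) * p 4 * (p 0 * (p 6)⁻¹ * (p 0)⁻¹) * p 4 *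
      (p 0 * (p 6)⁻¹ * (p 0)⁻¹) = p 0 * (p 0 * p 0) := hL
  _ = (p 0 * (p 6)⁻¹ * (p 0)⁻¹) * p 4 * (p 0 * (p 6)⁻¹ * (p 0)⁻¹) * p 4 *
      (p 0 * (p 6)⁻¹ * (p 0)⁻¹) * p 4 := hR.symm

def F : P →* B := PresentedGroup.toGroup hf
def G : B →* P := PresentedGroup.toGroup hg

lemma hGF : G.comp F = MonoidHom.id P := by
  apply PresentedGroup.ext
  intro i
  have hof : ∀ j : Fin 8, F (PresentedGroup.of j) = fB j := fun j => PresentedGroup.toGroup.of hf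
  have hog : ∀ j : Fin 2, G (PresentedGroup.of j) = gP j := fun j => PresentedGroup.toGroup.of hg
  simp only [MonoidHom.comp_apply, MonoidHom.id_apply, hof]
  fin_cases i
  · show G (fB 0) = p 0
    simp only [fB, map_mul, map_inv, q, hog, gP]
    exact hAB
  · show G (fB 1) = p 1
    simp only [fB, map_mul, map_inv, q, hog, gP]
    rw [hAB, e4]
  · show G (fB 2) = p 2
    simp only [fB, map_mul, map_inv, q, hog, gP]
    rw [hAB, e5]
  · show G (fB 3) = p 3
    simp only [fB, map_mul, map_inv, q, hog, gP]
    rw [hAB, e3]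
  · show G (fB 4) = p 4
    simp only [fB, q, hog, gP]
  · show G (fB 5) = p 5
    simp only [fB, q, hog, gP]
    rw [e6]
  · show G (fB 6) = p 6
    simp only [fB, map_mul, map_inv, q, hog, gP]
    rw [hAB]
    group
  · show G (fB 7) = p 7
    simp only [fB, map_mul, map_inv, q, hog, gP]
    rw [hAB, e7]
    group

lemma hFG : F.comp G = MonoidHom.id B := by
  apply PresentedGroup.ext
  intro i
  have hof : ∀ j : Fin 8, F (PresentedGroup.of j) = fB j := fun j => PresentedGroup.toGroup.of hf
  have hog : ∀ j : Fin 2, G (PresentedGroup.of j) = gP j := fun j => PresentedGroup.toGroup.of hg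
  simp only [MonoidHom.comp_apply, MonoidHom.id_apply, hog]
  fin_cases i
  · show F (gP 0) = q 0
    simp only [gP, p, hof]
    rfl
  · show F (gP 1) = q 1
    simp only [gP, map_mul, map_inv, p, hof, fB]
    group

/-- the group generated by `λ₃,λ₄,λ₅,λ₇,λ₁₀,λ₁₁,λ₁₂,λ₁₄` subject
to the seven listed relations is isomorphic to the braid group of type G₂. -/
theorem stmt7 : Nonempty (PresentedGroup rels ≃* PresentedGroup braidRels) := by
  exact ⟨MonoidHom.toMulEquiv F G hGF hFG⟩

end Stmt7
end

section
/- The pentagon relation: if ε is the 2×2 integer matrix with ε₁₂ = -1, ε₂₁ = 1 (so ε_{12} = -ε_{21} = -1), then the composition of five cluster mutations μ₁μ₂μ₁μ₂μ₁ (in the convention where subsequent mutations are taken at the images of the vertices) acts on the coordinate torus (x₁,x₂) as the transposition of the two coordinates; in particular the composition of the induced birational maps of the (x₁,x₂)-plane, followed by the coordinate swap, is the identity. -/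
/-!
Over any field the exchange matrix alternates between `ε` and `-ε`, and the coordinates run through
`(a, b) ↦ (a⁻¹, b(1+a)) ↦ ((1+b+ab)/a, (b(1+a))⁻¹) ↦ (a/(1+b+ab), (1+b)/(ab)) ↦ (b⁻¹, ab/(1+b)) ↦ (b, a)`.
The only denominators met are `a`, `b`, `1+a`, `1+b` and `1+b+ab`, which do not vanish in `ℚ(x₁, x₂)`
at `a = x₁`, `b = x₂`.
-/

def mutMat {I : Type*} [DecidableEq I] (ε : I → I → ℤ) (k : I) : I → I → ℤ := fun i j =>
  if i = k ∨ j = k then -ε i j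
  else if 0 ≤ ε i k then ε i j + ε i k * max 0 (ε k j)
  else ε i j + ε i k * max 0 (-ε k j)

noncomputable def mutCoord {I : Type*} [DecidableEq I] {K : Type*} [Field K]
    (ε : I → I → ℤ) (k : I) (x : I → K) : I → K := fun i =>
  if i = k then (x k)⁻¹
  else if 0 ≤ ε i k then x i * (1 + x k) ^ (ε i k)
  else x i * (1 + (x k)⁻¹) ^ (ε i k)

noncomputable def mutS {I : Type*} [DecidableEq I] {K : Type*} [Field K] (k : I)
    (s : (I → I → ℤ) × (I → K)) : (I → I → ℤ) × (I → K) :=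
  (mutMat s.1 k, mutCoord s.1 k s.2)

noncomputable abbrev K2 : Type := FractionRing (MvPolynomial (Fin 2) ℚ)

noncomputable def X2 (i : Fin 2) : K2 :=
  algebraMap (MvPolynomial (Fin 2) ℚ) K2 (MvPolynomial.X i)

def εPent : Fin 2 → Fin 2 → ℤ := ![![0, -1], ![1, 0]]

lemma mutMat_εPent_zero : mutMat εPent 0 = -εPent := by
  funext i j; fin_cases i <;> fin_cases j <;> decide

lemma mutMat_neg_εPent_one : mutMat (-εPent) 1 = εPent := by
  funext i j; fin_cases i <;> fin_cases j <;> decide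

lemma mutS_zero_εPent {K : Type*} [Field K] {u v u' v' : K} (hu : u⁻¹ = u')
    (hv : v * (1 + u) = v') : mutS 0 (εPent, ![u, v]) = (-εPent, ![u', v']) := by
  subst hu hv
  refine Prod.ext mutMat_εPent_zero ?_
  funext i; fin_cases i <;> simp [mutS, mutCoord, εPent]

lemma mutS_one_neg_εPent {K : Type*} [Field K] {u v u' v' : K} (hu : u * (1 + v) = u')
    (hv : v⁻¹ = v') : mutS 1 (-εPent, ![u, v]) = (εPent, ![u', v']) := by
  subst hu hv
  refine Prod.ext mutMat_neg_εPent_one ?_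
  funext i; fin_cases i <;> simp [mutS, mutCoord, εPent]

theorem mutS_pentagon {K : Type*} [Field K] {a b : K} (ha : a ≠ 0) (hb : b ≠ 0)
    (h1a : 1 + a ≠ 0) (h1b : 1 + b ≠ 0) (hab : 1 + b + a * b ≠ 0) :
    (mutS 0 (mutS 1 (mutS 0 (mutS 1 (mutS 0 (εPent, ![a, b])))))).2 = ![b, a] := by
  rw [mutS_zero_εPent rfl rfl,
    mutS_one_neg_εPent (u' := (1 + b + a * b) / a) (by field_simp; ring) rfl,
    mutS_zero_εPent (u' := a / (1 + b + a * b)) (v' := (1 + b) / (a * b)) (by simp)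
      (by field_simp; ring),
    mutS_one_neg_εPent (u' := b⁻¹) (v' := a * b / (1 + b)) (by field_simp; ring) (by simp),
    mutS_zero_εPent (u' := b) (v' := a) (by simp) (by field_simp; ring)]

open MvPolynomial

lemma algebraMap_ne_zero_of_constantCoeff_ne_zero {p : MvPolynomial (Fin 2) ℚ}
    (hp : constantCoeff p ≠ 0) : algebraMap (MvPolynomial (Fin 2) ℚ) K2 p ≠ 0 :=
  (map_ne_zero_iff _ (IsFractionRing.injective _ K2)).mpr
    (ne_of_apply_ne constantCoeff (by rwa [map_zero]))

lemma X2_ne_zero (i : Fin 2) : X2 i ≠ 0 :=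
  (map_ne_zero_iff _ (IsFractionRing.injective _ K2)).mpr (X_ne_zero i)

/-- the pentagon relation.  For `ε₁₂ = -ε₂₁ = -1`, the composition
of five mutations `μ₁μ₂μ₁μ₂μ₁` acts on the coordinate torus `(x₁,x₂)` as the
transposition of the two coordinates. -/
theorem stmt8 :
    (mutS 0 (mutS 1 (mutS 0 (mutS 1 (mutS 0 (εPent, X2)))))).2 0 = X2 1 ∧
    (mutS 0 (mutS 1 (mutS 0 (mutS 1 (mutS 0 (εPent, X2)))))).2 1 = X2 0 := by
  have h1a : 1 + X2 0 ≠ 0 := by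
    convert algebraMap_ne_zero_of_constantCoeff_ne_zero (p := 1 + X 0) (by simp) using 1
    simp [X2]
  have h1b : 1 + X2 1 ≠ 0 := by
    convert algebraMap_ne_zero_of_constantCoeff_ne_zero (p := 1 + X 1) (by simp) using 1
    simp [X2]
  have hab : 1 + X2 1 + X2 0 * X2 1 ≠ 0 := by
    convert algebraMap_ne_zero_of_constantCoeff_ne_zero (p := 1 + X 1 + X 0 * X 1) (by simp) using 1
    simp [X2]
  have hX : X2 = ![X2 0, X2 1] := by
    ext i; fin_cases i <;> rfl
  rw [hX, mutS_pentagon (X2_ne_zero 0) (X2_ne_zero 1) h1a h1b hab]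
  exact ⟨rfl, rfl⟩
end

section
/- The amalgamation map is Poisson: with the setup of amalgamation of two seeds (I,ε,d) and (J,η,c) along L and resulting seed (K,ζ,b), the map sending (x_i)_{i∈I} × (y_j)_{j∈J} to (z_k) with z_k = x_k for k ∈ I∖L, z_k = y_k for k ∈ J∖L, and z_k = x_k·y_k for k ∈ L, intertwines the product Poisson bracket {x_i,x_j} = ε̂_{ij}x_ix_j, {y_i,y_j} = η̂_{ij}y_iy_j, {x,y} = 0 with the bracket {z_i,z_j} = ζ̂_{ij}z_iz_j, where ε̂_{ij}=ε_{ij}d_j etc. -/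
namespace Stmt15

/- We model the two seeds glued along `L` as `I = A ⊕ L`, `J = B ⊕ L`, with
amalgamated set `K = A ⊕ (B ⊕ L)`. -/

variable {A B L : Type*}

/-- The amalgamated (skew-symmetrized) matrix `ζ̂` on `K = A ⊕ (B ⊕ L)`. -/
def zeta (ε : A ⊕ L → A ⊕ L → ℚ) (η : B ⊕ L → B ⊕ L → ℚ) :
    A ⊕ (B ⊕ L) → A ⊕ (B ⊕ L) → ℚ
  | .inl a, .inl a' => ε (.inl a) (.inl a')
  | .inl _, .inr (.inl _) => 0
  | .inl a, .inr (.inr l) => ε (.inl a) (.inr l)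
  | .inr (.inl _), .inl _ => 0
  | .inr (.inl b), .inr (.inl b') => η (.inl b) (.inl b')
  | .inr (.inl b), .inr (.inr l) => η (.inl b) (.inr l)
  | .inr (.inr l), .inl a => ε (.inr l) (.inl a)
  | .inr (.inr l), .inr (.inl b) => η (.inr l) (.inl b)
  | .inr (.inr l), .inr (.inr l') => ε (.inr l) (.inr l') + η (.inr l) (.inr l')

/-- The amalgamation of the coordinates: `z_k = x_k` on `I∖L`, `z_k = y_k` on
`J∖L`, and `z_k = x_k·y_k` on `L`. -/
def amalg {K : Type*} [Field K] (x : A ⊕ L → K) (y : B ⊕ L → K) :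
    A ⊕ (B ⊕ L) → K
  | .inl a => x (.inl a)
  | .inr (.inl b) => y (.inl b)
  | .inr (.inr l) => x (.inr l) * y (.inr l)

/-- the amalgamation map is Poisson.  If the bracket `P` (an
antisymmetric biderivation) satisfies `{x_i,x_j} = ε̂_{ij}x_ix_j`,
`{y_i,y_j} = η̂_{ij}y_iy_j` and `{x_i,y_j} = 0`, then on the amalgamated
coordinates `z` one has `{z_i,z_j} = ζ̂_{ij}z_iz_j`. -/
theorem stmt15 {K : Type*} [Field K] [CharZero K] (P : K → K → K)
    (Padd₁ : ∀ a b c : K, P (a + b) c = P a c + P b c)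
    (Padd₂ : ∀ a b c : K, P a (b + c) = P a b + P a c)
    (Pleib₁ : ∀ a b c : K, P (a * b) c = a * P b c + b * P a c)
    (Pleib₂ : ∀ a b c : K, P a (b * c) = b * P a c + c * P a b)
    (Pskew : ∀ a b : K, P a b = -P b a)
    (εh : A ⊕ L → A ⊕ L → ℚ) (ηh : B ⊕ L → B ⊕ L → ℚ)
    (x : A ⊕ L → K) (y : B ⊕ L → K)
    (hxx : ∀ i j, P (x i) (x j) = (εh i j : K) * (x i * x j))
    (hyy : ∀ i j, P (y i) (y j) = (ηh i j : K) * (y i * y j))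
    (hxy : ∀ i j, P (x i) (y j) = 0) :
    ∀ i j, P (amalg x y i) (amalg x y j) =
      (zeta εh ηh i j : K) * (amalg x y i * amalg x y j) := by
  have hyx : ∀ j i, P (y j) (x i) = 0 := fun j i => by rw [Pskew, hxy, neg_zero]
  rintro (a | b | l) (a' | b' | l') <;>
    simp only [amalg, zeta, Pleib₁, Pleib₂, hxx, hyy, hxy, hyx, Rat.cast_add] <;> ring

end Stmt15
end
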